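/- arXiv:1212.0436 — 2 statements merged into one kernel-verified Lean document; each statement's English description precedes it below -/
import Mathlib

section
/- Let V be a finite-dimensional complex vector space and A : ℕ → End_ℂ(V) a sequence of endomorphisms such that A 0 is diagonalizable, with eigenspace decomposition V = ⊕_{c ∈ spec(A 0)} V_c; for each eigenvalue c let π_c denote the projection of V onto V_c along the other eigenspaces. Then there exist sequences P, B : ℕ → End_ℂ(V) such that: (i) P 0 = id; (ii) B 0 = A 0; (iii) every B i maps each eigenspace V_c into itself; (iv) the restriction of B 1 to V_c equals π_c ∘ (A 1)|_{V_c} for every eigenvalue c; and (v) for every n ≥ 0 one has ∑_{i+j=n} (A j) ∘ (P i) + (n−1)·P (n−1) = ∑_{i+j=n} (P j) ∘ (B i), with the convention P (−1) = 0 (for n = 0 the extra term is absent). In other words, the t-action t = ∑_{i≥0} A_i u^i on V[[u]] (where moving u past t produces the shift term, reflecting t(v uⁱ) = ∑_j A_j(v)u^{i+j} + i·v·u^{i+1}) can be conjugated by an automorphism P = ∑ P_i u^i with P 0 = id into a block-diagonal t-action B = ∑ B_i u^i whose off-diagonal blocks B_i(c,c′) vanish for all i and all c ≠ c′, leaving A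 0 and the diagonal blocks of A 1 unchanged. -/
open Module.End Finset


section aux
variable {V : Type*} [AddCommGroup V] [Module ℂ V]

/-- The image of `S - μ` lies in the sum of eigenspaces other than `μ`. -/
lemma r36_sub_smul_mem (S : Module.End ℂ V)
    (hdiag : ⨆ μ : ℂ, S.eigenspace μ = ⊤) (μ : ℂ) (w : V) :
    S w - μ • w ∈ ⨆ μ' ≠ μ, S.eigenspace μ' := by
  have h : S w - μ • w = (S - μ • (1 : Module.End ℂ V)) w := by
    simp [LinearMap.sub_apply, LinearMap.smul_apply]
  rw [h]
  have hle : LinearMap.range (S - μ • (1 : Module.End ℂ V)) ≤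
      ⨆ μ' ≠ μ, S.eigenspace μ' := by
    rw [LinearMap.range_eq_map, ← hdiag, Submodule.map_iSup]
    apply iSup_le
    intro μ'
    rintro _ ⟨v, hv, rfl⟩
    have hv' : S v = μ' • v := Module.End.mem_eigenspace_iff.mp hv
    have : (S - μ • (1 : Module.End ℂ V)) v = (μ' - μ) • v := by
      simp [LinearMap.sub_apply, hv', sub_smul]
    rw [this]
    by_cases hμ : μ' = μ
    · simp [hμ]
    · exact le_iSup₂ (f := fun μ'' (_ : μ'' ≠ μ) => S.eigenspace μ'') μ' hμ
        (Submodule.smul_mem _ _ hv)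
  exact hle ⟨w, rfl⟩

/-- Key decomposition: every `f` splits as a commuting part plus a bracket with `S`. -/
lemma r36_key [FiniteDimensional ℂ V] (S : Module.End ℂ V)
    (hdiag : ⨆ μ : ℂ, S.eigenspace μ = ⊤) (f : Module.End ℂ V) :
    ∃ gp : Module.End ℂ V × Module.End ℂ V,
      f = gp.1 + (S * gp.2 - gp.2 * S) ∧ S * gp.1 = gp.1 * S := by
  set T : Module.End ℂ V →ₗ[ℂ] Module.End ℂ V :=
    LinearMap.mulLeft ℂ S - LinearMap.mulRight ℂ S with hT
  have hTapp : ∀ g : Module.End ℂ V, T g = S * g - g * S := by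
    intro g; simp [hT, LinearMap.mulLeft_apply, LinearMap.mulRight_apply]
  have hinf : LinearMap.ker T ⊓ LinearMap.range T = ⊥ := by
    rw [Submodule.eq_bot_iff]
    rintro g ⟨hker, p, rfl⟩
    simp only [SetLike.mem_coe, LinearMap.mem_ker, hTapp] at hker
    have hcomm : S * T p = T p * S := by
      rw [hTapp]; exact sub_eq_zero.mp hker
    ext v
    have hv : v ∈ (⊤ : Submodule ℂ V) := trivial
    rw [← hdiag] at hv
    suffices h : ∀ v ∈ (⨆ μ : ℂ, S.eigenspace μ), T p v = 0 by exact h v hv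
    have hker2 : (⨆ μ : ℂ, S.eigenspace μ) ≤ LinearMap.ker (T p) := by
      apply iSup_le
      intro μ v hv
      rw [LinearMap.mem_ker]
      have hvμ : S v = μ • v := Module.End.mem_eigenspace_iff.mp hv
      have h1 : T p v ∈ S.eigenspace μ := by
        rw [Module.End.mem_eigenspace_iff]
        have h3 := congrFun (congrArg DFunLike.coe hcomm) v
        simp only [Module.End.mul_apply] at h3
        rw [h3, hvμ, map_smul]
      have h2 : T p v ∈ ⨆ μ' ≠ μ, S.eigenspace μ' := by
        have : T p v = S (p v) - μ • (p v) := by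
          simp [hTapp, Module.End.mul_apply, hvμ, map_smul]
        rw [this]
        exact r36_sub_smul_mem S hdiag μ (p v)
      have hdisj := (Module.End.eigenspaces_iSupIndep S μ).eq_bot
      have : T p v ∈ S.eigenspace μ ⊓ ⨆ μ' ≠ μ, S.eigenspace μ' := ⟨h1, h2⟩
      rw [hdisj] at this
      exact this
    intro v hv; exact hker2 hv
  have hsup : LinearMap.ker T ⊔ LinearMap.range T = ⊤ := by
    apply Submodule.eq_top_of_finrank_eq
    have h1 := Submodule.finrank_sup_add_finrank_inf_eq (LinearMap.ker T) (LinearMap.range T)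
    have h2 := LinearMap.finrank_range_add_finrank_ker T
    rw [hinf] at h1
    simp only [finrank_bot, add_zero] at h1
    omega
  have hf : f ∈ LinearMap.ker T ⊔ LinearMap.range T := hsup ▸ Submodule.mem_top
  obtain ⟨g, hg, h, hh, rfl⟩ := Submodule.mem_sup.mp hf
  obtain ⟨p, rfl⟩ := hh
  refine ⟨(g, p), by rw [hTapp], ?_⟩
  rw [LinearMap.mem_ker, hTapp] at hg
  have := sub_eq_zero.mp hg
  simp [this]

end aux

section aux2
variable {V : Type*} [AddCommGroup V] [Module ℂ V]

noncomputable def r36C (A : ℕ → Module.End ℂ V)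
    (F : ℕ → Module.End ℂ V × Module.End ℂ V) (n : ℕ) : Module.End ℂ V :=
  (∑ i ∈ Finset.range (n + 1), A (n + 1 - i) * (F i).1) + n • (F n).1
    - ∑ i ∈ Finset.range n, (F (n - i)).1 * (F (i + 1)).2

noncomputable def r36hist (A : ℕ → Module.End ℂ V)
    (φ : Module.End ℂ V → Module.End ℂ V × Module.End ℂ V) :
    ℕ → ℕ → Module.End ℂ V × Module.End ℂ V
  | 0 => fun _ => (1, A 0)
  | n + 1 =>
      Function.update (r36hist A φ n) (n + 1)
        (-(φ (r36C A (r36hist A φ n) n)).2, (φ (r36C A (r36hist A φ n) n)).1)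

lemma r36hist_stable (A : ℕ → Module.End ℂ V)
    (φ : Module.End ℂ V → Module.End ℂ V × Module.End ℂ V) :
    ∀ n i, i ≤ n → r36hist A φ n i = r36hist A φ i i := by
  intro n
  induction n with
  | zero => intro i hi; interval_cases i; rfl
  | succ n ih =>
    intro i hi
    rcases eq_or_lt_of_le hi with rfl | h
    · rfl
    · have hi' : i ≤ n := Nat.lt_succ_iff.mp h
      rw [r36hist, Function.update_of_ne (by omega), ih i hi']

lemma r36hist_succ (A : ℕ → Module.End ℂ V)
    (φ : Module.End ℂ V → Module.End ℂ V × Module.End ℂ V) (n : ℕ) :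
    r36hist A φ (n + 1) (n + 1) =
      (-(φ (r36C A (r36hist A φ n) n)).2, (φ (r36C A (r36hist A φ n) n)).1) := by
  rw [r36hist, Function.update_self]

end aux2

/-- **Block-diagonalization of a formal `t`-action (coefficientwise Remark 3.6).**
Let `V` be a finite-dimensional complex vector space and `A : ℕ → End(V)` with `A 0`
diagonalizable (the eigenspaces of `A 0` span `V`).  Then there are sequences
`P B : ℕ → End(V)` with `P 0 = id`, `B 0 = A 0`, each `B i` preserving every eigenspace
`V_c` of `A 0`, the restriction of `B 1` to `V_c` equal to `π_c ∘ (A 1)|_{V_c}`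
(i.e. `A 1 v - B 1 v` lies in the sum of the other eigenspaces for `v ∈ V_c`), and for all
`n`, `∑_{i+j=n} A_j ∘ P_i + (n-1)·P_{n-1} = ∑_{i+j=n} P_j ∘ B_i` (the term `(n-1)·P_{n-1}`
being absent for `n = 0`; note `(n-1) • P (n-1)` vanishes for `n = 0` and `n = 1` by
truncated subtraction).  In other words, the `t`-action `t = ∑ A_i uⁱ` on `V[[u]]` can be
conjugated by `P = ∑ P_i uⁱ` with `P 0 = id` into the block-diagonal action `B = ∑ B_i uⁱ`,
leaving `A 0` and the diagonal blocks of `A 1` unchanged. -/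
theorem exists_blockDiagonalization_of_formal_t_action
    (V : Type*) [AddCommGroup V] [Module ℂ V] [FiniteDimensional ℂ V]
    (A : ℕ → Module.End ℂ V)
    (hdiag : ⨆ μ : ℂ, (A 0).eigenspace μ = ⊤) :
    ∃ P B : ℕ → Module.End ℂ V,
      P 0 = 1 ∧
      B 0 = A 0 ∧
      (∀ (i : ℕ) (μ : ℂ), ∀ v ∈ (A 0).eigenspace μ, B i v ∈ (A 0).eigenspace μ) ∧
      (∀ μ : ℂ, ∀ v ∈ (A 0).eigenspace μ,
        A 1 v - B 1 v ∈ ⨆ μ' ≠ μ, (A 0).eigenspace μ') ∧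
      (∀ n : ℕ,
        (∑ i ∈ Finset.range (n + 1), A (n - i) * P i) + (n - 1) • P (n - 1) =
          ∑ i ∈ Finset.range (n + 1), P (n - i) * B i) := by
  classical
  set φ : Module.End ℂ V → Module.End ℂ V × Module.End ℂ V :=
    fun f => Classical.choose (r36_key (A 0) hdiag f) with hφdef
  have hφ : ∀ f : Module.End ℂ V,
      f = (φ f).1 + (A 0 * (φ f).2 - (φ f).2 * A 0) ∧ A 0 * (φ f).1 = (φ f).1 * A 0 :=
    fun f => Classical.choose_spec (r36_key (A 0) hdiag f)
  set P : ℕ → Module.End ℂ V := fun n => (r36hist A φ n n).1 with hPdef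
  set B : ℕ → Module.End ℂ V := fun n => (r36hist A φ n n).2 with hBdef
  have hP0 : P 0 = 1 := rfl
  have hB0 : B 0 = A 0 := rfl
  -- the defining recursion, rewritten in terms of P and B
  have hCC : ∀ n, r36C A (r36hist A φ n) n =
      (∑ i ∈ Finset.range (n + 1), A (n + 1 - i) * P i) + n • P n
        - ∑ i ∈ Finset.range n, P (n - i) * B (i + 1) := by
    intro n
    rw [r36C]
    congr 1
    · congr 1
      apply Finset.sum_congr rfl
      intro i hi
      rw [r36hist_stable A φ n i (by simpa using Nat.lt_succ_iff.mp (Finset.mem_range.mp hi))]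
    · apply Finset.sum_congr rfl
      intro i hi
      have hi' := Finset.mem_range.mp hi
      rw [r36hist_stable A φ n (n - i) (Nat.sub_le n i),
        r36hist_stable A φ n (i + 1) (by omega)]
  have hPB : ∀ n, P (n + 1) = -(φ (r36C A (r36hist A φ n) n)).2 ∧
      B (n + 1) = (φ (r36C A (r36hist A φ n) n)).1 := by
    intro n
    constructor
    · show (r36hist A φ (n+1) (n+1)).1 = _
      rw [r36hist_succ]
    · show (r36hist A φ (n+1) (n+1)).2 = _
      rw [r36hist_succ]
  have hrel : ∀ n,
      (∑ i ∈ Finset.range (n + 1), A (n + 1 - i) * P i) + n • P n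
        - ∑ i ∈ Finset.range n, P (n - i) * B (i + 1)
      = B (n + 1) - A 0 * P (n + 1) + P (n + 1) * A 0 := by
    intro n
    rw [← hCC n]
    obtain ⟨h1, _⟩ := hφ (r36C A (r36hist A φ n) n)
    obtain ⟨hp, hb⟩ := hPB n
    rw [hb, hp]
    conv_lhs => rw [h1]
    simp only [mul_neg, neg_mul, sub_neg_eq_add, neg_neg]
    abel
  refine ⟨P, B, hP0, hB0, ?_, ?_, ?_⟩
  · -- B i preserves eigenspaces
    intro i μ v hv
    have hvμ : A 0 v = μ • v := Module.End.mem_eigenspace_iff.mp hv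
    cases i with
    | zero =>
      rw [hB0, hvμ]
      exact Submodule.smul_mem _ μ hv
    | succ n =>
      obtain ⟨_, hb⟩ := hPB n
      have hcomm := (hφ (r36C A (r36hist A φ n) n)).2
      rw [← hb] at hcomm
      rw [Module.End.mem_eigenspace_iff]
      have h3 := congrFun (congrArg DFunLike.coe hcomm) v
      simp only [Module.End.mul_apply] at h3
      rw [h3, hvμ, map_smul]
  · -- diagonal block of B 1
    intro μ v hv
    have hvμ : A 0 v = μ • v := Module.End.mem_eigenspace_iff.mp hv
    have h0 := hrel 0
    simp only [zero_add, Finset.range_one, Finset.sum_singleton, Nat.sub_zero, zero_smul,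
      add_zero, Finset.range_zero, Finset.sum_empty, sub_zero, hP0, mul_one] at h0
    -- h0 : A 1 = B 1 - A 0 * P 1 + P 1 * A 0
    have h1 : A 1 v - B 1 v = -(A 0 (P 1 v) - μ • (P 1 v)) := by
      have h2 := congrFun (congrArg DFunLike.coe h0) v
      simp only [LinearMap.add_apply, LinearMap.sub_apply, Module.End.mul_apply] at h2
      rw [h2, hvμ, map_smul]
      abel
    rw [h1]
    exact neg_mem (r36_sub_smul_mem (A 0) hdiag μ (P 1 v))
  · -- the conjugation equation
    intro n
    cases n with
    | zero =>
      simp [hP0, hB0]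
    | succ n =>
      have hX := sub_eq_iff_eq_add.mp (hrel n)
      have e1 : n + 1 - 1 = n := rfl
      rw [e1]
      conv_rhs => rw [Finset.sum_range_succ, Finset.sum_range_succ']
      conv_lhs => rw [Finset.sum_range_succ]
      simp only [Nat.sub_self, Nat.succ_sub_succ, Nat.sub_zero]
      rw [hP0, hB0, one_mul]
      -- goal: (∑ A(n+1-i)*P i) + A 0 * P (n+1) + n • P n
      --     = ((∑ P(n-i)*B(i+1)) + P (n+1) * A 0) + B (n+1)
      have : (∑ i ∈ Finset.range (n + 1), A (n + 1 - i) * P i) + A 0 * P (n + 1) + n • P n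
          = ((∑ i ∈ Finset.range (n + 1), A (n + 1 - i) * P i) + n • P n)
            + A 0 * P (n + 1) := by abel
      rw [this, hX]
      abel
end

section
/- Let A be a commutative ring, w ∈ A a unit, and D : A → A any additive map. Let A((u)) be the module of formal Laurent series ∑_{k≥k₀} g_k u^k with coefficients g_k ∈ A, on which D acts coefficientwise and u^{-1} acts by shifting. Then the additive map Φ : A((u)) → A((u)) defined by Φ(g) = D(g) − u^{-1}·(w·g) is bijective. -/
/-!
Writing `T` for the automorphism `x ↦ w * x` of `A`, the coefficient identity
`(Φ g)_k = D (g_k) - T (g_{k+1})` can be solved for `g_{k+1} = T⁻¹ (D (g_k) - (Φ g)_k)`.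
Since a Laurent series vanishes below some index, its coefficients are thus determined
recursively from the bottom of the support upwards: this gives injectivity, and running the
recursion from below the support of a target series gives a preimage.
-/

namespace HahnSeries

variable {M : Type*} [AddCommGroup M] (D : M →+ M) (T : M ≃+ M)

theorem eq_zero_of_map_coeff_eq_map_coeff_add_one {g : HahnSeries ℤ M}
    (hg : ∀ k, D (g.coeff k) = T (g.coeff (k + 1))) : g = 0 := by
  by_contra hne
  have hbelow : g.coeff (g.order - 1) = 0 := coeff_eq_zero_of_lt_order (by omega)
  have hg' := hg (g.order - 1)
  rw [hbelow, map_zero, sub_add_cancel, eq_comm, map_eq_zero_iff T T.injective] at hg'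
  exact hne (coeff_order_eq_zero.1 hg')

/-- The coefficients `c n = g_{N+n}` of a solution of `D (g_k) - T (g_{k+1}) = h_k`
vanishing below `N`. -/
def twistedRecursion (h : HahnSeries ℤ M) (N : ℤ) : ℕ → M
  | 0 => 0
  | n + 1 => T.symm (D (twistedRecursion h N n) - h.coeff (N + n))

theorem exists_forall_coeff_sub_eq (h : HahnSeries ℤ M) :
    ∃ g : HahnSeries ℤ M, ∀ k, D (g.coeff k) - T (g.coeff (k + 1)) = h.coeff k := by
  set N := h.order
  set c := twistedRecursion D T h N
  -- `(k - N).toNat = 0` for `k ≤ N`, so no case split is needed in the definition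
  let f : ℤ → M := fun k => c (k - N).toNat
  have hf : ∀ k ≤ N, f k = 0 := fun k hk => by
    simp only [f, show (k - N).toNat = 0 by omega]
    rfl
  have hbdd : BddBelow (Function.support f) :=
    ⟨N, fun k hk => not_lt.1 fun hlt => Function.mem_support.1 hk (hf k hlt.le)⟩
  refine ⟨ofSuppBddBelow f hbdd, fun k => ?_⟩
  simp only [ofSuppBddBelow_coeff]
  rcases lt_or_ge k N with hk | hk
  · rw [hf k hk.le, hf (k + 1) (by omega), map_zero, map_zero, sub_zero,
      coeff_eq_zero_of_lt_order hk]
  · have hsucc : (k + 1 - N).toNat = (k - N).toNat + 1 := by omega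
    have hindex : N + ((k - N).toNat : ℤ) = k := by omega
    simp only [f, hsucc, c, twistedRecursion, AddEquiv.apply_symm_apply, hindex]
    abel

theorem bijective_of_coeff_eq_sub_map_coeff_add_one (Φ : HahnSeries ℤ M → HahnSeries ℤ M)
    (hΦ : ∀ g k, (Φ g).coeff k = D (g.coeff k) - T (g.coeff (k + 1))) :
    Function.Bijective Φ := by
  refine ⟨fun g₁ g₂ hg => sub_eq_zero.1 ?_, fun h => ?_⟩
  · refine eq_zero_of_map_coeff_eq_map_coeff_add_one D T fun k => ?_
    have hk := congrArg (coeff · k) hg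
    simp only [hΦ] at hk
    simp only [coeff_sub, map_sub]
    exact sub_eq_sub_iff_sub_eq_sub.1 hk
  · obtain ⟨g, hg⟩ := exists_forall_coeff_sub_eq D T h
    exact ⟨g, coeff_injective (funext fun k => (hΦ g k).trans (hg k))⟩

end HahnSeries

/-- **Bijectivity of `D - u⁻¹·w` on formal Laurent series.**
Let `A` be a commutative ring, `w ∈ A` a unit, and `D : A → A` an additive map.  On the
module `A((u))` of formal Laurent series (formalized as Hahn series over `ℤ`), any map `Φ`
acting on coefficients by `(Φ g)_k = D(g_k) - w·g_{k+1}` (i.e. `Φ(g) = D(g) - u⁻¹·(w·g)`,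
with `D` acting coefficientwise and `u⁻¹` shifting) is bijective. -/
theorem twisted_derivative_bijective_of_isUnit
    (A : Type*) [CommRing A] (w : A) (hw : IsUnit w) (D : A →+ A)
    (Φ : HahnSeries ℤ A → HahnSeries ℤ A)
    (hΦ : ∀ (g : HahnSeries ℤ A) (k : ℤ),
      (Φ g).coeff k = D (g.coeff k) - w * g.coeff (k + 1)) :
    Function.Bijective Φ := by
  obtain ⟨u, rfl⟩ := hw
  exact HahnSeries.bijective_of_coeff_eq_sub_map_coeff_add_one D
    (DistribMulAction.toAddEquiv A u) Φ hΦ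
end
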